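/- Let x̄ be a local optimal solution to the problem: minimize φ(x) subject to x ∈ Ω_i for all i ∈ ℕ, where φ : ℝⁿ → ℝ ∪ {±∞} is finite at x̄ and the sets Ω_i ⊆ ℝⁿ are locally closed around x̄. Assume the system {Ω_i}_{i∈ℕ} has the CHIP at x̄ and satisfies the NQC at x̄. Then −∂̂⁺φ(x̄) ⊆ cl{Σ_{i∈I} x*_i | x*_i ∈ N(x̄;Ω_i), I a finite subset of ℕ}. If in addition the set {Σ_{i∈I} x*_i | x*_i ∈ N(x̄;Ω_i), I finite} is closed (the NCC), the closure can be omitted. In particular, if φ is Fréchet differentiable at x̄, then 0 ∈ ∇φ(x̄) + cl{Σ_{i∈I} x*_i | x*_i ∈ N(x̄;Ω_i), I finite}. -/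

import Mathlib

/-!
Local optimality makes `-v` a Fréchet normal to `⋂ Ωᵢ` at `x̄` for every `v ∈ ∂̂⁺φ(x̄)`, so `-v`
is polar to the tangent cone of the intersection, which by the CHIP is `⋂ T(x̄; Ωᵢ)`.

A vector `w` polar to `⋂ Λᵢ`, for closed sets `Λᵢ ∋ 0`, lies in the closure of the finite sums of
(positive multiples of) proximal normals to the `Λᵢ`: otherwise minimizing the penalty
`‖y - w‖² + (m + 1)² ∑_{i < m} d(y, Λᵢ)²` yields points `y_m` for which `w - y_m` is such a sum,
`‖y_m‖` stays away from `0` and `‖y_m‖² ≤ 2 ⟪w, y_m⟫`; a limit point of `(y_m)` then lies in every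
`Λᵢ` and has positive inner product with `w`.

Finally, proximal normals to `T(x̄; Ωᵢ)` are limiting normals to `Ωᵢ`: blowing `Ωᵢ` up around `x̄`
along a tangent sequence, nearest points of the midpoint of `x` and its projection `p` give Fréchet
normals to `Ωᵢ` at points tending to `x̄`, and they converge to `(x - p) / 2` because `p` is the
unique nearest point of that midpoint in the cone.
-/

open Filter Topology Set Metric

section Defs
variable {E : Type*} [NormedAddCommGroup E] [NormedSpace ℝ E]

/-- Bouligand–Severi contingent tangent cone. -/
def tcone (Ω : Set E) (x : E) : Set E :=
  {v | ∃ (t : ℕ → ℝ) (w : ℕ → E), (∀ k, 0 < t k) ∧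
    Tendsto t atTop (nhds 0) ∧ Tendsto w atTop (nhds v) ∧ ∀ k, x + t k • w k ∈ Ω}
end Defs

section Defs2
variable {E F : Type*} [NormedAddCommGroup E] [InnerProductSpace ℝ E]
  [NormedAddCommGroup F] [InnerProductSpace ℝ F]

/-- Fréchet (regular/pre-) normal cone. -/
def fnormal (Ω : Set E) (x : E) : Set E :=
  {v | ∀ ε > 0, ∃ δ > 0, ∀ u ∈ Ω, ‖u - x‖ < δ → (inner ℝ v (u - x) : ℝ) ≤ ε * ‖u - x‖}

/-- Limiting (Mordukhovich) normal cone. -/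
def lnormal (Ω : Set E) (x : E) : Set E :=
  {v | ∃ xk vk : ℕ → E, (∀ k, xk k ∈ Ω) ∧ (∀ k, vk k ∈ fnormal Ω (xk k)) ∧
    Tendsto xk atTop (nhds x) ∧ Tendsto vk atTop (nhds v)}

/-- Normal cone of convex analysis. -/
def cnormal (Ω : Set E) (x : E) : Set E :=
  {v | ∀ y ∈ Ω, (inner ℝ v (y - x) : ℝ) ≤ 0}

/-- All finite sums `∑_{i ∈ I} xᵢ` with `xᵢ ∈ Nc i`. -/
def finSums (Nc : ℕ → Set E) : Set E :=
  {v | ∃ (I : Finset ℕ) (xs : ℕ → E), (∀ i ∈ I, xs i ∈ Nc i) ∧ v = ∑ i ∈ I, xs i}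

/-- Fréchet normal cone in a product of inner product spaces
(equivalently, w.r.t. the Euclidean product structure). -/
def fnormalP (Ω : Set (E × F)) (z : E × F) : Set (E × F) :=
  {v | ∀ ε > 0, ∃ δ > 0, ∀ u ∈ Ω, ‖u - z‖ < δ →
    (inner ℝ v.1 (u.1 - z.1) : ℝ) + (inner ℝ v.2 (u.2 - z.2) : ℝ) ≤ ε * ‖u - z‖}

/-- Limiting normal cone in a product of inner product spaces. -/
def lnormalP (Ω : Set (E × F)) (z : E × F) : Set (E × F) :=
  {v | ∃ zk vk : ℕ → E × F, (∀ k, zk k ∈ Ω) ∧ (∀ k, vk k ∈ fnormalP Ω (zk k)) ∧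
    Tendsto zk atTop (nhds z) ∧ Tendsto vk atTop (nhds v)}

/-- Epigraph of an extended-real-valued function. -/
def epiSet (φ : E → EReal) : Set (E × ℝ) := {p | φ p.1 ≤ (p.2 : EReal)}

/-- Basic (limiting, Mordukhovich) subdifferential. -/
noncomputable def bsub (φ : E → EReal) (x : E) : Set E :=
  {v | (v, (-1 : ℝ)) ∈ lnormalP (epiSet φ) (x, (φ x).toReal)}

/-- Singular subdifferential. -/
noncomputable def ssub (φ : E → EReal) (x : E) : Set E :=
  {v | (v, (0 : ℝ)) ∈ lnormalP (epiSet φ) (x, (φ x).toReal)}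

/-- Fréchet subdifferential. -/
def fsub (φ : E → EReal) (x : E) : Set E :=
  {v | ∀ ε > 0, ∃ δ > 0, ∀ u, ‖u - x‖ < δ →
    φ x + (((inner ℝ v (u - x) : ℝ) - ε * ‖u - x‖ : ℝ) : EReal) ≤ φ u}

/-- Fréchet upper subdifferential `∂̂⁺φ(x) = −∂̂(−φ)(x)`. -/
def fsubUpper (φ : E → EReal) (x : E) : Set E := {v | -v ∈ fsub (fun u => -(φ u)) x}
end Defs2

open scoped RealInnerProductSpace

section TangentCone
variable {E : Type*} [NormedAddCommGroup E] [NormedSpace ℝ E]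

theorem mem_tcone_iff {Ω : Set E} {x v : E} : v ∈ tcone Ω x ↔
    ∀ ε > 0, ∃ t > 0, ∃ w, t < ε ∧ ‖w - v‖ < ε ∧ x + t • w ∈ Ω := by
  constructor
  · rintro ⟨t, w, ht, ht0, hw, hmem⟩ ε hε
    have hwε := (tendsto_iff_norm_sub_tendsto_zero.1 hw).eventually (gt_mem_nhds hε)
    obtain ⟨k, htk, hwk⟩ := ((ht0.eventually (gt_mem_nhds hε)).and hwε).exists
    exact ⟨t k, ht k, w k, htk, hwk, hmem k⟩
  · intro h
    choose t ht w htε hw hmem using fun j : ℕ => h (1 / (j + 1)) Nat.one_div_pos_of_nat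
    have hlim := tendsto_one_div_add_atTop_nhds_zero_nat (𝕜 := ℝ)
    refine ⟨t, w, ht, squeeze_zero (fun j => (ht j).le) (fun j => (htε j).le) hlim, ?_, hmem⟩
    exact tendsto_iff_norm_sub_tendsto_zero.2 <|
      squeeze_zero (fun _ => norm_nonneg _) (fun j => (hw j).le) hlim

theorem zero_mem_tcone {Ω : Set E} {x : E} (hx : x ∈ Ω) : 0 ∈ tcone Ω x :=
  mem_tcone_iff.2 fun ε hε => ⟨ε / 2, by positivity, 0, by linarith, by simpa, by simpa⟩

theorem isClosed_tcone (Ω : Set E) (x : E) : IsClosed (tcone Ω x) := by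
  refine isClosed_of_closure_subset fun v hv => mem_tcone_iff.2 fun ε hε => ?_
  obtain ⟨v', hv', hvv'⟩ := Metric.mem_closure_iff.1 hv (ε / 2) (by positivity)
  obtain ⟨t, ht, w, htε, hw, hmem⟩ := mem_tcone_iff.1 hv' (ε / 2) (by positivity)
  refine ⟨t, ht, w, by linarith, ?_, hmem⟩
  calc ‖w - v‖ ≤ ‖w - v'‖ + ‖v' - v‖ := norm_sub_le_norm_sub_add_norm_sub _ _ _
    _ < ε / 2 + ε / 2 := by rw [← dist_eq_norm v', dist_comm]; gcongr
    _ = ε := add_halves ε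

end TangentCone

theorem exists_mem_forall_norm_sub_le {E : Type*} [NormedAddCommGroup E] [ProperSpace E]
    {s : Set E} (hs : IsClosed s) (hne : s.Nonempty) (x : E) :
    ∃ p ∈ s, (∀ u ∈ s, ‖x - p‖ ≤ ‖x - u‖) ∧ ‖x - p‖ = infDist x s := by
  obtain ⟨p, hp, hdist⟩ := hs.exists_infDist_eq_dist hne x
  refine ⟨p, hp, fun u hu => ?_, by rw [hdist, dist_eq_norm]⟩
  rw [← dist_eq_norm, ← dist_eq_norm, ← hdist]
  exact infDist_le_dist_of_mem hu

section Normals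
variable {H : Type*} [NormedAddCommGroup H] [InnerProductSpace ℝ H]

theorem mem_fnormal_iff {S : Set H} {x v : H} :
    v ∈ fnormal S x ↔ ∀ ε > 0, ∀ᶠ u in 𝓝 x, u ∈ S → ⟪v, u - x⟫ ≤ ε * ‖u - x‖ := by
  simp only [fnormal, Metric.eventually_nhds_iff, dist_eq_norm]
  exact forall₂_congr fun ε _ => exists_congr fun δ => and_congr_right fun _ =>
    ⟨fun h u hu hS => h u hS hu, fun h u hS hu => h hu hS⟩

theorem mem_fsub_iff {φ : H → EReal} {x v : H} : v ∈ fsub φ x ↔ ∀ ε > 0, ∀ᶠ u in 𝓝 x,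
    φ x + ((⟪v, u - x⟫ - ε * ‖u - x‖ : ℝ) : EReal) ≤ φ u := by
  simp only [Metric.eventually_nhds_iff, dist_eq_norm]
  exact Iff.rfl

theorem smul_mem_fnormal {S : Set H} {x v : H} {c : ℝ} (hc : 0 < c) (hv : v ∈ fnormal S x) :
    c • v ∈ fnormal S x := by
  refine mem_fnormal_iff.2 fun ε hε => ?_
  filter_upwards [mem_fnormal_iff.1 hv (ε / c) (by positivity)] with u hu hS
  calc ⟪c • v, u - x⟫ = c * ⟪v, u - x⟫ := real_inner_smul_left _ _ _
    _ ≤ c * (ε / c * ‖u - x‖) := by gcongr; exact hu hS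
    _ = ε * ‖u - x‖ := by field_simp

theorem smul_mem_lnormal {S : Set H} {x v : H} {c : ℝ} (hc : 0 < c) (hv : v ∈ lnormal S x) :
    c • v ∈ lnormal S x := by
  obtain ⟨xk, vk, hxS, hvN, hx, hv⟩ := hv
  exact ⟨xk, fun k => c • vk k, hxS, fun k => smul_mem_fnormal hc (hvN k), hx, hv.const_smul c⟩

theorem mem_lnormal_of_eventually {S : Set H} {x v : H} {xk vk : ℕ → H}
    (hx : Tendsto xk atTop (𝓝 x)) (hv : Tendsto vk atTop (𝓝 v))
    (h : ∀ᶠ k in atTop, xk k ∈ S ∧ vk k ∈ fnormal S (xk k)) : v ∈ lnormal S x := by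
  obtain ⟨N, hN⟩ := eventually_atTop.1 h
  exact ⟨fun k => xk (k + N), fun k => vk (k + N), fun k => (hN _ (Nat.le_add_left N k)).1,
    fun k => (hN _ (Nat.le_add_left N k)).2, hx.comp (tendsto_add_atTop_nat N),
    hv.comp (tendsto_add_atTop_nat N)⟩

theorem mem_fnormal_of_inter_mem_nhds {S U : Set H} {x v : H} (hU : U ∈ 𝓝 x)
    (hv : v ∈ fnormal (S ∩ U) x) : v ∈ fnormal S x :=
  mem_fnormal_iff.2 fun ε hε => by
    filter_upwards [mem_fnormal_iff.1 hv ε hε, hU] with u hu hUu hS using hu ⟨hS, hUu⟩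

theorem mem_fnormal_of_mem_fnormal_preimage_homothety {S : Set H} {a q v : H} {t : ℝ}
    (ht : 0 < t) (hv : v ∈ fnormal ((fun u => a + t • u) ⁻¹' S) q) :
    v ∈ fnormal S (a + t • q) := by
  refine mem_fnormal_iff.2 fun ε hε => ?_
  have hcont : Tendsto (fun u => t⁻¹ • (u - a)) (𝓝 (a + t • q)) (𝓝 q) :=
    (by fun_prop : Continuous fun u : H => t⁻¹ • (u - a)).tendsto' _ _ <| by
      simp [smul_smul, inv_mul_cancel₀ ht.ne']
  filter_upwards [hcont.eventually (mem_fnormal_iff.1 hv ε hε)] with u hu hS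
  have hsub : t⁻¹ • (u - a) - q = t⁻¹ • (u - (a + t • q)) := by
    rw [← sub_sub, smul_sub t⁻¹ (u - a), smul_smul, inv_mul_cancel₀ ht.ne', one_smul]
  have hpre : a + t • t⁻¹ • (u - a) = u := by
    rw [smul_smul, mul_inv_cancel₀ ht.ne', one_smul, add_sub_cancel]
  have := hu (by simpa [Set.mem_preimage, hpre] using hS)
  rw [hsub, real_inner_smul_right, norm_smul, Real.norm_of_nonneg (inv_nonneg.2 ht.le),
    mul_left_comm] at this
  exact le_of_mul_le_mul_left this (inv_pos.2 ht)

theorem inner_sub_le_of_forall_norm_sub_le {s : Set H} {x p u : H}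
    (hnear : ∀ u ∈ s, ‖x - p‖ ≤ ‖x - u‖) (hu : u ∈ s) : ⟪x - p, u - p⟫ ≤ ‖u - p‖ ^ 2 / 2 := by
  have h := hnear u hu
  rw [show x - u = (x - p) - (u - p) by abel] at h
  have hsq := pow_le_pow_left₀ (norm_nonneg _) h 2
  rw [norm_sub_sq_real (x - p) (u - p)] at hsq
  linarith

theorem sub_mem_fnormal_of_forall_norm_sub_le {s : Set H} {x p : H}
    (hnear : ∀ u ∈ s, ‖x - p‖ ≤ ‖x - u‖) : x - p ∈ fnormal s p := by
  refine fun ε hε => ⟨2 * ε, by positivity, fun u hu hδ => ?_⟩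
  calc ⟪x - p, u - p⟫ ≤ ‖u - p‖ / 2 * ‖u - p‖ := by
        rw [div_mul_eq_mul_div, ← sq]; exact inner_sub_le_of_forall_norm_sub_le hnear hu
    _ ≤ ε * ‖u - p‖ := by gcongr; linarith

theorem inner_nonpos_of_mem_fnormal_of_mem_tcone {S : Set H} {x v d : H}
    (hv : v ∈ fnormal S x) (hd : d ∈ tcone S x) : ⟪v, d⟫ ≤ 0 := by
  obtain ⟨t, w, ht, ht0, hw, hmem⟩ := hd
  have htw : Tendsto (fun k => x + t k • w k) atTop (𝓝 x) := by
    simpa using tendsto_const_nhds.add (ht0.smul hw)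
  have hle : ∀ ε > 0, ⟪v, d⟫ ≤ ε * ‖d‖ := fun ε hε => by
    refine le_of_tendsto_of_tendsto (tendsto_const_nhds.inner hw) (hw.norm.const_mul ε) ?_
    filter_upwards [htw.eventually (mem_fnormal_iff.1 hv ε hε)] with k hk
    have := hk (hmem k)
    rw [add_sub_cancel_left, real_inner_smul_right, norm_smul, Real.norm_of_nonneg (ht k).le,
      mul_left_comm] at this
    exact le_of_mul_le_mul_left this (ht k)
  refine le_of_forall_pos_le_add fun ε hε => ?_
  calc ⟪v, d⟫ ≤ ε / (‖d‖ + 1) * ‖d‖ := hle _ (by positivity)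
    _ ≤ ε / (‖d‖ + 1) * (‖d‖ + 1) := by gcongr; linarith
    _ = 0 + ε := by field_simp; ring

theorem norm_sq_add_le_of_forall_norm_sub_le {s : Set H} {x p u : H}
    (hnear : ∀ u ∈ s, ‖x - p‖ ≤ ‖x - u‖) (hu : u ∈ s) :
    ‖p + (2⁻¹ : ℝ) • (x - p) - p‖ ^ 2 + ‖u - p‖ ^ 2 / 2 ≤
      ‖p + (2⁻¹ : ℝ) • (x - p) - u‖ ^ 2 := by
  rw [add_sub_cancel_left, show p + (2⁻¹ : ℝ) • (x - p) - u = (2⁻¹ : ℝ) • (x - p) - (u - p) by abel,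
    norm_sub_sq_real ((2⁻¹ : ℝ) • (x - p)) (u - p), real_inner_smul_left]
  linarith [inner_sub_le_of_forall_norm_sub_le hnear hu]

theorem eq_add_sum_smul_of_forall_le_sum_sq {w y : H} {p : ℕ → H} {c : ℝ} {s : Finset ℕ}
    (hmin : ∀ u, ‖y - w‖ ^ 2 + c * ∑ i ∈ s, ‖y - p i‖ ^ 2 ≤
      ‖u - w‖ ^ 2 + c * ∑ i ∈ s, ‖u - p i‖ ^ 2) :
    w = y + ∑ i ∈ s, c • (y - p i) := by
  set g := y - w + ∑ i ∈ s, c • (y - p i) with hg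
  have hderiv : HasFDerivAt (fun u => ‖u - w‖ ^ 2 + c * ∑ i ∈ s, ‖u - p i‖ ^ 2)
      (2 • innerSL ℝ g) y := by
    refine (((hasFDerivAt_id y).sub_const w).norm_sq.add ((HasFDerivAt.fun_sum (u := s)
      fun i _ => ((hasFDerivAt_id y).sub_const (p i)).norm_sq).const_mul c)).congr_fderiv ?_
    ext v
    simp [g, Finset.mul_sum, mul_left_comm]
  have hzero := IsLocalMin.hasFDerivAt_eq_zero (.of_forall hmin) hderiv
  have hg0 : g = 0 := by simpa using congr($hzero g)
  rw [← sub_eq_zero, ← neg_eq_zero, ← hg0, hg]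
  abel

theorem neg_mem_fnormal_of_isLocalMinOn {φ : H → EReal} {S : Set H} {x v : H}
    (hfin : φ x ≠ ⊤ ∧ φ x ≠ ⊥) (hmin : IsLocalMinOn φ S x) (hv : v ∈ fsubUpper φ x) :
    -v ∈ fnormal S x := by
  obtain ⟨r, hr⟩ : ∃ r : ℝ, φ x = r := ⟨(φ x).toReal, (EReal.coe_toReal hfin.1 hfin.2).symm⟩
  have hv' : -v ∈ fsub (fun u => -φ u) x := hv
  refine mem_fnormal_iff.2 fun ε hε => ?_
  filter_upwards [mem_fsub_iff.1 hv' ε hε, eventually_nhdsWithin_iff.1 hmin] with u hu hmu hS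
  have h := hu.trans (EReal.neg_le_neg_iff.2 (hmu hS))
  rw [hr, ← EReal.coe_neg, ← EReal.coe_add, EReal.coe_le_coe_iff] at h
  linarith

theorem mem_fsubUpper_of_hasGradientAt [CompleteSpace H] {ψ : H → ℝ} {g x : H}
    (h : HasGradientAt ψ g x) :
    g ∈ fsubUpper (fun u => (ψ u : EReal)) x := by
  show -g ∈ fsub (fun u => -(ψ u : EReal)) x
  refine mem_fsub_iff.2 fun ε hε => ?_
  filter_upwards [(hasGradientAt_iff_isLittleO.1 h).bound hε] with u hu
  rw [← EReal.coe_neg, ← EReal.coe_neg, ← EReal.coe_add, EReal.coe_le_coe_iff, inner_neg_left]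
  rw [Real.norm_eq_abs] at hu
  linarith [(abs_le.1 hu).2]

variable [ProperSpace H]

theorem sub_mem_lnormal_of_strict_nearest_tcone {Ω : Set H} {xb z p : H} {r : ℝ}
    (hxb : xb ∈ Ω) (hr : 0 < r) (hcl : IsClosed (Ω ∩ closedBall xb r)) (hp : p ∈ tcone Ω xb)
    (hstrict : ∀ u ∈ tcone Ω xb, ‖z - p‖ ^ 2 + ‖u - p‖ ^ 2 / 2 ≤ ‖z - u‖ ^ 2) :
    z - p ∈ lnormal Ω xb := by
  obtain ⟨t, w, ht, ht0, hw, hmem⟩ := hp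
  set A : ℕ → Set H := fun k => (fun u => xb + t k • u) ⁻¹' (Ω ∩ closedBall xb r)
  have hA : ∀ k, IsClosed (A k) := fun k => hcl.preimage (by fun_prop)
  have hA0 : ∀ k, 0 ∈ A k := fun k => by simp [A, hxb, hr.le]
  choose q hqA hq _ using fun k => exists_mem_forall_norm_sub_le (hA k) ⟨0, hA0 k⟩ z
  have hq_bdd : ∀ k, q k ∈ closedBall 0 (2 * ‖z‖) := fun k => by
    have := hq k 0 (hA0 k)
    rw [sub_zero] at this
    rw [mem_closedBall_zero_iff]
    linarith [norm_le_norm_add_norm_sub' (q k) z, norm_sub_rev z (q k)]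
  obtain ⟨q', -, φ, hφ, hqφ⟩ := (isCompact_closedBall 0 (2 * ‖z‖)).tendsto_subseq hq_bdd
  have htφ : Tendsto (t ∘ φ) atTop (𝓝 0) := ht0.comp hφ.tendsto_atTop
  have hq'T : q' ∈ tcone Ω xb := ⟨t ∘ φ, q ∘ φ, fun _ => ht _, htφ, hqφ, fun j => (hqA (φ j)).1⟩
  have hwA : ∀ᶠ k in atTop, w k ∈ A k := by
    have htw : Tendsto (fun k => xb + t k • w k) atTop (𝓝 xb) := by
      simpa using tendsto_const_nhds.add (ht0.smul hw)
    filter_upwards [htw.eventually (closedBall_mem_nhds xb hr)] with k hk using ⟨hmem k, hk⟩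
  have hzq' : ‖z - q'‖ ≤ ‖z - p‖ :=
    le_of_tendsto_of_tendsto (tendsto_const_nhds.sub hqφ).norm
      (tendsto_const_nhds.sub (hw.comp hφ.tendsto_atTop)).norm
      ((hφ.tendsto_atTop.eventually hwA).mono fun j hj => hq (φ j) _ hj)
  have hq'p : q' = p := by
    have hsq := pow_le_pow_left₀ (norm_nonneg _) hzq' 2
    have hle : ‖q' - p‖ ^ 2 ≤ 0 := by linarith [hstrict q' hq'T]
    exact sub_eq_zero.1 (norm_eq_zero.1 (pow_eq_zero_iff two_ne_zero |>.1
      (le_antisymm hle (sq_nonneg _))))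
  have hxk : Tendsto (fun j => xb + t (φ j) • q (φ j)) atTop (𝓝 xb) := by
    simpa using tendsto_const_nhds.add (htφ.smul hqφ)
  refine mem_lnormal_of_eventually hxk (hq'p ▸ tendsto_const_nhds.sub hqφ) ?_
  filter_upwards [hxk.eventually (isOpen_ball.mem_nhds (mem_ball_self hr))] with j hj
  refine ⟨(hqA (φ j)).1, mem_fnormal_of_inter_mem_nhds (closedBall_mem_nhds_of_mem hj) ?_⟩
  exact mem_fnormal_of_mem_fnormal_preimage_homothety (ht _)
    (sub_mem_fnormal_of_forall_norm_sub_le (hq (φ j)))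

theorem sub_mem_lnormal_of_forall_norm_sub_le_tcone {Ω : Set H} {xb x p : H} {r : ℝ}
    (hxb : xb ∈ Ω) (hr : 0 < r) (hcl : IsClosed (Ω ∩ closedBall xb r)) (hp : p ∈ tcone Ω xb)
    (hnear : ∀ u ∈ tcone Ω xb, ‖x - p‖ ≤ ‖x - u‖) : x - p ∈ lnormal Ω xb := by
  have hhalf := sub_mem_lnormal_of_strict_nearest_tcone hxb hr hcl hp fun u hu =>
    norm_sq_add_le_of_forall_norm_sub_le hnear hu
  convert smul_mem_lnormal two_pos hhalf using 1
  simp [smul_smul]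

theorem exists_penalized_minimizer {Λ : ℕ → Set H} (hΛ : ∀ i, IsClosed (Λ i))
    (hne : ∀ i, (Λ i).Nonempty) (w : H) {c : ℝ} (hc : 0 ≤ c) (s : Finset ℕ) :
    ∃ (y : H) (p : ℕ → H), (∀ i, p i ∈ Λ i ∧ ∀ u ∈ Λ i, ‖y - p i‖ ≤ ‖y - u‖) ∧
      w = y + ∑ i ∈ s, c • (y - p i) ∧
      ∀ u, ‖y - w‖ ^ 2 + c * ∑ i ∈ s, ‖y - p i‖ ^ 2 ≤
        ‖u - w‖ ^ 2 + c * ∑ i ∈ s, infDist u (Λ i) ^ 2 := by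
  set F : H → ℝ := fun u => ‖u - w‖ ^ 2 + c * ∑ i ∈ s, infDist u (Λ i) ^ 2
  have hF : Continuous F := by
    have := fun i => Metric.continuous_infDist_pt (α := H) (Λ i)
    fun_prop
  have hcoercive : Tendsto F (cocompact H) atTop := by
    refine tendsto_atTop_mono (fun u => ?_) <| (tendsto_pow_atTop two_ne_zero).comp
      (tendsto_atTop_add_const_right _ (-‖w‖) tendsto_norm_cocompact_atTop)
    have : (‖u‖ + -‖w‖) ^ 2 ≤ ‖u - w‖ ^ 2 :=
      sq_le_sq.2 ((abs_norm_sub_norm_le u w).trans (le_abs_self _))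
    have : 0 ≤ c * ∑ i ∈ s, infDist u (Λ i) ^ 2 := by positivity
    simp only [Function.comp_apply, F]
    linarith
  obtain ⟨y, hy⟩ := hF.exists_forall_le hcoercive
  choose p hp hnear hdist using fun i => exists_mem_forall_norm_sub_le (hΛ i) (hne i) y
  have hFy : F y = ‖y - w‖ ^ 2 + c * ∑ i ∈ s, ‖y - p i‖ ^ 2 := by simp only [F, hdist]
  refine ⟨y, p, fun i => ⟨hp i, hnear i⟩, eq_add_sum_smul_of_forall_le_sum_sq fun u => ?_,
    fun u => hFy ▸ hy u⟩
  rw [← hFy]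
  refine (hy u).trans ?_
  simp only [F]
  gcongr with i
  · exact infDist_nonneg
  · rw [← dist_eq_norm]
    exact infDist_le_dist_of_mem (hp i)

theorem exists_penalized_point_of_far_from_finSums {Λ N : ℕ → Set H} (hΛ : ∀ i, IsClosed (Λ i))
    (h0 : ∀ i, 0 ∈ Λ i)
    (hN : ∀ i x p, p ∈ Λ i → (∀ u ∈ Λ i, ‖x - p‖ ≤ ‖x - u‖) → x - p ∈ N i)
    (hNcone : ∀ i, ∀ c : ℝ, 0 < c → ∀ v ∈ N i, c • v ∈ N i)
    {w : H} {δ : ℝ} (hδ : 0 ≤ δ) (hfar : ∀ v ∈ finSums N, δ ≤ ‖w - v‖) (m : ℕ) :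
    ∃ (y : H) (p : ℕ → H), (∀ i, p i ∈ Λ i) ∧ (∀ i < m, ‖y - p i‖ ≤ ‖w‖ / (m + 1)) ∧
      ‖y - w‖ ≤ ‖w‖ ∧ δ ^ 2 ≤ 2 * ⟪w, y⟫ := by
  obtain ⟨y, p, hp, hw, hmin⟩ := exists_penalized_minimizer hΛ (fun i => ⟨0, h0 i⟩) w
    (sq_nonneg ((m : ℝ) + 1)) (Finset.range m)
  have hmin0 : ‖y - w‖ ^ 2 + ((m : ℝ) + 1) ^ 2 * ∑ i ∈ Finset.range m, ‖y - p i‖ ^ 2 ≤ ‖w‖ ^ 2 := by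
    simpa [infDist_zero_of_mem (h0 _)] using hmin 0
  have hsum : 0 ≤ ((m : ℝ) + 1) ^ 2 * ∑ i ∈ Finset.range m, ‖y - p i‖ ^ 2 := by positivity
  have hwy : w - y ∈ finSums N := ⟨Finset.range m, fun i => ((m : ℝ) + 1) ^ 2 • (y - p i),
    fun i _ => hNcone i _ (by positivity) _ (hN i y (p i) (hp i).1 (hp i).2),
    by rw [hw, add_sub_cancel_left]⟩
  have hδy : δ ≤ ‖y‖ := by simpa using hfar _ hwy
  refine ⟨y, p, fun i => (hp i).1, fun i hi => ?_, ?_, ?_⟩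
  · have hi := Finset.single_le_sum (fun j _ => sq_nonneg ‖y - p j‖) (Finset.mem_range.2 hi)
    rw [le_div_iff₀ (by positivity), ← pow_le_pow_iff_left₀ (by positivity) (norm_nonneg w)
      two_ne_zero]
    nlinarith
  · exact (pow_le_pow_iff_left₀ (norm_nonneg _) (norm_nonneg w) two_ne_zero).1 (by linarith)
  · rw [norm_sub_sq_real, real_inner_comm] at hmin0
    nlinarith [pow_le_pow_left₀ hδ hδy 2]

theorem mem_closure_finSums_of_inner_nonpos {Λ N : ℕ → Set H} (hΛ : ∀ i, IsClosed (Λ i))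
    (h0 : ∀ i, 0 ∈ Λ i)
    (hN : ∀ i x p, p ∈ Λ i → (∀ u ∈ Λ i, ‖x - p‖ ≤ ‖x - u‖) → x - p ∈ N i)
    (hNcone : ∀ i, ∀ c : ℝ, 0 < c → ∀ v ∈ N i, c • v ∈ N i)
    {w : H} (hw : ∀ d ∈ ⋂ i, Λ i, ⟪w, d⟫ ≤ 0) : w ∈ closure (finSums N) := by
  by_contra hcl
  obtain ⟨δ, hδ, hfar⟩ : ∃ δ > 0, ∀ v ∈ finSums N, δ ≤ ‖w - v‖ := by
    simpa [Metric.mem_closure_iff, dist_eq_norm] using hcl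
  choose y p hp hpy hyw hinner using
    exists_penalized_point_of_far_from_finSums hΛ h0 hN hNcone hδ.le hfar
  obtain ⟨y', -, φ, hφ, hyφ⟩ := (isCompact_closedBall w ‖w‖).tendsto_subseq fun m =>
    mem_closedBall_iff_norm.2 (hyw m)
  have hy'Λ : ∀ i, y' ∈ Λ i := fun i => by
    have hdiff : Tendsto (fun j => y (φ j) - p (φ j) i) atTop (𝓝 0) := by
      have hbound : Tendsto (fun j => ‖w‖ / ((φ j : ℝ) + 1)) atTop (𝓝 0) := by
        simpa [Function.comp_def, div_eq_mul_inv] using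
          (tendsto_one_div_add_atTop_nhds_zero_nat.const_mul ‖w‖).comp hφ.tendsto_atTop
      refine squeeze_zero_norm' ?_ hbound
      filter_upwards [hφ.tendsto_atTop.eventually (eventually_gt_atTop i)] with j hj
      exact hpy (φ j) i hj
    exact (hΛ i).mem_of_tendsto (by simpa using hyφ.sub hdiff) (.of_forall fun j => hp _ i)
  have hlim : δ ^ 2 ≤ 2 * ⟪w, y'⟫ :=
    ge_of_tendsto ((tendsto_const_nhds.inner hyφ).const_mul 2) (.of_forall fun j => hinner (φ j))
  nlinarith [hw y' (mem_iInter.2 hy'Λ)]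

end Normals

theorem SIP_geometric_upper_subdifferential_general {n : ℕ}
    (Ω : ℕ → Set (EuclideanSpace ℝ (Fin n))) (xb : EuclideanSpace ℝ (Fin n))
    (φ : EuclideanSpace ℝ (Fin n) → EReal)
    (hfin : φ xb ≠ ⊤ ∧ φ xb ≠ ⊥)
    (hxb : ∀ i, xb ∈ Ω i)
    (hloccl : ∀ i, ∃ r > (0 : ℝ), IsClosed (Ω i ∩ closedBall xb r))
    (hopt : ∃ U ∈ nhds xb, ∀ x ∈ U, (∀ i, x ∈ Ω i) → φ xb ≤ φ x)
    (hCHIP : tcone (⋂ i, Ω i) xb = ⋂ i, tcone (Ω i) xb) :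
    (∀ v ∈ fsubUpper φ xb, -v ∈ closure (finSums fun i => lnormal (Ω i) xb)) ∧
    (IsClosed (finSums fun i => lnormal (Ω i) xb) →
      ∀ v ∈ fsubUpper φ xb, -v ∈ finSums fun i => lnormal (Ω i) xb) ∧
    (∀ (ψ : EuclideanSpace ℝ (Fin n) → ℝ) (g : EuclideanSpace ℝ (Fin n)),
      (∀ u, φ u = ((ψ u : ℝ) : EReal)) → HasGradientAt ψ g xb →
      -g ∈ closure (finSums fun i => lnormal (Ω i) xb)) := by
  obtain ⟨U, hU, hUmin⟩ := hopt
  have hmin : IsLocalMinOn φ (⋂ i, Ω i) xb := Filter.mem_of_superset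
    (inter_mem_nhdsWithin _ hU) fun u hu => hUmin u hu.2 (mem_iInter.1 hu.1)
  choose r hr hcl using hloccl
  have hmain : ∀ v ∈ fsubUpper φ xb, -v ∈ closure (finSums fun i => lnormal (Ω i) xb) :=
    fun v hv => mem_closure_finSums_of_inner_nonpos (fun i => isClosed_tcone _ _)
      (fun i => zero_mem_tcone (hxb i))
      (fun i _ _ => sub_mem_lnormal_of_forall_norm_sub_le_tcone (hxb i) (hr i) (hcl i))
      (fun i _ hc _ hv => smul_mem_lnormal hc hv)
      fun d hd => inner_nonpos_of_mem_fnormal_of_mem_tcone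
        (neg_mem_fnormal_of_isLocalMinOn hfin hmin hv) (hCHIP ▸ hd)
  refine ⟨hmain, fun hclosed v hv => hclosed.closure_eq ▸ hmain v hv, fun ψ g hψ hg => ?_⟩
  obtain rfl : φ = fun u => (ψ u : EReal) := funext hψ
  exact hmain g (mem_fsubUpper_of_hasGradientAt hg)

/-- **Upper subdifferential conditions for SIP with countable geometric constraints**
(Theorem 4.1).  If `x̄` is a local minimizer of `φ` over `⋂ Ωᵢ`, the system has the
CHIP and NQC at `x̄`, then `−∂̂⁺φ(x̄) ⊆ cl{∑_{i∈I} x*ᵢ | x*ᵢ ∈ N(x̄;Ωᵢ)}`; the closure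
can be omitted under the NCC, and in the Fréchet differentiable case
`0 ∈ ∇φ(x̄) + cl{...}`. -/
theorem SIP_geometric_upper_subdifferential {n : ℕ}
    (Ω : ℕ → Set (EuclideanSpace ℝ (Fin n))) (xb : EuclideanSpace ℝ (Fin n))
    (φ : EuclideanSpace ℝ (Fin n) → EReal)
    (hfin : φ xb ≠ ⊤ ∧ φ xb ≠ ⊥)
    (hxb : ∀ i, xb ∈ Ω i)
    (hloccl : ∀ i, ∃ r > (0 : ℝ), IsClosed (Ω i ∩ closedBall xb r))
    (hopt : ∃ U ∈ nhds xb, ∀ x ∈ U, (∀ i, x ∈ Ω i) → φ xb ≤ φ x)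
    (hCHIP : tcone (⋂ i, Ω i) xb = ⋂ i, tcone (Ω i) xb)
    (hNQC : ∀ xs : ℕ → EuclideanSpace ℝ (Fin n),
      (∀ i, xs i ∈ lnormal (Ω i) xb) →
      Tendsto (fun m => ∑ i ∈ Finset.range m, xs i) atTop (nhds 0) →
      ∀ i, xs i = 0) :
    (∀ v ∈ fsubUpper φ xb, -v ∈ closure (finSums fun i => lnormal (Ω i) xb)) ∧
    (IsClosed (finSums fun i => lnormal (Ω i) xb) →
      ∀ v ∈ fsubUpper φ xb, -v ∈ finSums fun i => lnormal (Ω i) xb) ∧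
    (∀ (ψ : EuclideanSpace ℝ (Fin n) → ℝ) (g : EuclideanSpace ℝ (Fin n)),
      (∀ u, φ u = ((ψ u : ℝ) : EReal)) → HasGradientAt ψ g xb →
      -g ∈ closure (finSums fun i => lnormal (Ω i) xb)) :=
  SIP_geometric_upper_subdifferential_general Ω xb φ hfin hxb hloccl hopt hCHIP
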